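/- Fix ϱ > 0, assume |θ| > ϱ and d·θ² ≤ 1. Then there exists a constant γ = γ(π, ϱ) > 0 such that x_{n+1} ≥ γ·x_n for all n ≥ 0. -/

import Mathlib

open Finset Filter

namespace AsymIsing

/-- Level-`k` vertices of the rooted `d`-ary tree: paths of length `k` from the root. -/
abbrev Vert (d k : ℕ) : Type := Fin k → Fin d

/-- A spin configuration on levels `0, …, n` of the `d`-ary tree. -/
abbrev Conf (d n : ℕ) : Type := ∀ k : Fin (n + 1), Vert d k → Fin 2

/-- A spin configuration on level `n` only. -/
abbrev LConf (d n : ℕ) : Type := Vert d n → Fin 2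

/-- The transition matrix of the asymmetric binary channel; the paper's state `1`
corresponds to the index `0` and the state `2` to the index `1`. -/
noncomputable def Mmat (θ Δ : ℝ) : Fin 2 → Fin 2 → ℝ := fun i j =>
  if i = 0 then (if j = 0 then (1 + θ - Δ) / 2 else (1 - θ + Δ) / 2)
  else (if j = 0 then (1 - θ - Δ) / 2 else (1 + θ + Δ) / 2)

/-- The stationary distribution `π = (π₁, π₂)` of the channel. -/
noncomputable def pst (θ Δ : ℝ) : Fin 2 → ℝ := fun i =>
  if i = 0 then 1 / 2 - Δ / (2 * (1 - θ)) else 1 / 2 + Δ / (2 * (1 - θ))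

/-- The root spin of a configuration. -/
def root {d n : ℕ} (σ : Conf d n) : Fin 2 := σ ⟨0, n.succ_pos⟩ (fun i => i.elim0)

/-- The restriction of a configuration to the last (`n`-th) level. -/
def top {d n : ℕ} (σ : Conf d n) : LConf d n := σ (Fin.last n)

/-- The probability of a full configuration on levels `0, …, n` under the broadcast
process: the root is drawn from `π` and spins propagate along edges via `M`. -/
noncomputable def confProb (d : ℕ) (θ Δ : ℝ) (n : ℕ) (σ : Conf d n) : ℝ :=
  pst θ Δ (root σ) *
    ∏ k : Fin n, ∏ v : Vert d (k + 1),
      Mmat θ Δ (σ k.castSucc (v ∘ Fin.castSucc)) (σ k.succ v)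

/-- `P(σ(n) = A)`: the marginal law of the level-`n` spins. -/
noncomputable def levelProb (d : ℕ) (θ Δ : ℝ) (n : ℕ) (A : LConf d n) : ℝ :=
  ∑ σ : Conf d n, if top σ = A then confProb d θ Δ n σ else 0

/-- `P(σ_ρ = i, σ(n) = A)`. -/
noncomputable def jointProb (d : ℕ) (θ Δ : ℝ) (n : ℕ) (i : Fin 2) (A : LConf d n) : ℝ :=
  ∑ σ : Conf d n, if root σ = i ∧ top σ = A then confProb d θ Δ n σ else 0

/-- The posterior `f_n(i, A) = P(σ_ρ = i ∣ σ(n) = A)`. -/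
noncomputable def post (d : ℕ) (θ Δ : ℝ) (n : ℕ) (i : Fin 2) (A : LConf d n) : ℝ :=
  jointProb d θ Δ n i A / levelProb d θ Δ n A

/-- The law of `σ^i(n)`, i.e. `P(σ(n) = A ∣ σ_ρ = i)`. -/
noncomputable def condLevel (d : ℕ) (θ Δ : ℝ) (n : ℕ) (i : Fin 2) (A : LConf d n) : ℝ :=
  jointProb d θ Δ n i A / pst θ Δ i

/-- The total variation distance between `σ^1(n)` and `σ^2(n)`. -/
noncomputable def tvDist (d : ℕ) (θ Δ : ℝ) (n : ℕ) : ℝ :=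
  (1 / 2) * ∑ A : LConf d n, |condLevel d θ Δ n 0 A - condLevel d θ Δ n 1 A|

/-- The reconstruction problem is solvable if `limsup_n d_TV(σ^1(n), σ^2(n)) > 0`. -/
def solvable (d : ℕ) (θ Δ : ℝ) : Prop :=
  0 < Filter.limsup (fun n => tvDist d θ Δ n) Filter.atTop

/-- Non-reconstruction: `limsup_n d_TV(σ^1(n), σ^2(n)) = 0`. -/
def nonReconstruction (d : ℕ) (θ Δ : ℝ) : Prop :=
  Filter.limsup (fun n => tvDist d θ Δ n) Filter.atTop = 0

/-- Expectation of a function of the level-`n` configuration, conditioned on `σ_ρ = 1`. -/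
noncomputable def expect1 (d : ℕ) (θ Δ : ℝ) (n : ℕ) (g : LConf d n → ℝ) : ℝ :=
  ∑ A : LConf d n, condLevel d θ Δ n 0 A * g A

/-- `x_n = E f_n(1, σ^1(n)) − π₁`. -/
noncomputable def xseq (d : ℕ) (θ Δ : ℝ) (n : ℕ) : ℝ :=
  expect1 d θ Δ n (fun A => post d θ Δ n 0 A) - pst θ Δ 0

/-- `z_n = E (f_n(1, σ^1(n)) − π₁)²`. -/
noncomputable def zseq (d : ℕ) (θ Δ : ℝ) (n : ℕ) : ℝ :=
  expect1 d θ Δ n (fun A => (post d θ Δ n 0 A - pst θ Δ 0) ^ 2)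

/-- The restriction of a level-`(n+1)` configuration to the subtree of the `j`-th
child of the root (paths starting with `j`). -/
def restrictChild {d n : ℕ} (j : Fin d) (A : LConf d (n + 1)) : LConf d n :=
  fun w => A (Fin.cons j w)

/-- `Y_j = f_n(1, σ_j(n+1))`, as a function of the level-`(n+1)` configuration. -/
noncomputable def Yfun (d : ℕ) (θ Δ : ℝ) (n : ℕ) (j : Fin d) (A : LConf d (n + 1)) : ℝ :=
  post d θ Δ n 0 (restrictChild j A)

/-- `Z₁ = ∏_j (1 + (θ/π₁)(Y_j − π₁))`, as a function of the level-`(n+1)` configuration. -/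
noncomputable def Z1fun (d : ℕ) (θ Δ : ℝ) (n : ℕ) (A : LConf d (n + 1)) : ℝ :=
  ∏ j : Fin d, (1 + (θ / pst θ Δ 0) * (Yfun d θ Δ n j A - pst θ Δ 0))

/-- `Z₂ = ∏_j (1 − (θ/π₂)(Y_j − π₁))`, as a function of the level-`(n+1)` configuration. -/
noncomputable def Z2fun (d : ℕ) (θ Δ : ℝ) (n : ℕ) (A : LConf d (n + 1)) : ℝ :=
  ∏ j : Fin d, (1 - (θ / pst θ Δ 1) * (Yfun d θ Δ n j A - pst θ Δ 0))

/-- The value of `Δ` making `π = (π₁, π₂)` the stationary distribution of the channel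
with second eigenvalue `θ`, namely `Δ = (1 − θ)(π₂ − π₁)`. -/
noncomputable def Dlt (θ π1 π2 : ℝ) : ℝ := (1 - θ) * (π2 - π1)

/-- The Gaussian-approximation function
`f(s) = E[π₁ e^{sμ₁+√s W₁} / (π₁ e^{sμ₁+√s W₁} + π₂ e^{sμ₂+√s W₂})] − π₁`,
where `μ₁ = 1/(2π₁)`, `μ₂ = −(1+π₂)/(2π₂²)`, `W₁ ∼ N(0, 1/π₁)` (realized as `w/√π₁`
for `w` standard Gaussian) and `W₂ = −(π₁/π₂)·W₁`. -/
noncomputable def gfun (π1 π2 : ℝ) (s : ℝ) : ℝ :=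
  (∫ w : ℝ,
      (π1 * Real.exp (s * (1 / (2 * π1)) + Real.sqrt s * (w / Real.sqrt π1))) /
        (π1 * Real.exp (s * (1 / (2 * π1)) + Real.sqrt s * (w / Real.sqrt π1)) +
          π2 * Real.exp (s * (-(1 + π2) / (2 * π2 ^ 2)) +
            Real.sqrt s * (-(π1 / π2) * (w / Real.sqrt π1))))
    ∂(ProbabilityTheory.gaussianReal 0 1)) - π1

/-!
Let `S_n = E[f_n(1, σ(n))²]`, so that `x_n = (S_n − π₁²)/π₁`. Given only the spins at level
`n + 1` below one child of the root (a level-`n` configuration `B` of its subtree), the posterior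
of the root is `θ f_n(1, B) + (1 − θ) π₁`, because the two-state chain is reversible. Observing
the whole level refines this observation, so by Jensen on the fibres of the restriction map
`S_{n+1} ≥ E[(θ f_n + (1 − θ) π₁)²] = θ² S_n + (1 − θ²) π₁²`, i.e. `x_{n+1} ≥ θ² x_n`.
Jensen also gives `x_n ≥ 0`, so `γ = ϱ²` works.
-/

lemma sum_pi_ite_apply_eq_mul_pow {ι α R : Type*} [Fintype ι] [DecidableEq ι] [Fintype α]
    [DecidableEq α] [CommSemiring R] (g : α → R) (j : ι) (b : α) :
    ∑ T : ι → α, (if T j = b then ∏ k, g (T k) else 0)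
      = g b * (∑ a, g a) ^ (Fintype.card ι - 1) := by
  have hT : ∀ T : ι → α, (if T j = b then ∏ k, g (T k) else 0)
      = ∏ k, if k = j then (if T k = b then g (T k) else 0) else g (T k) := by
    intro T
    split_ifs with h
    · exact prod_congr rfl fun k _ => by split_ifs with hk <;> simp_all
    · exact (prod_eq_zero (mem_univ j) (by simp [h])).symm
  rw [sum_congr rfl fun T _ => hT T,
    ← Fintype.prod_sum fun k a => if k = j then (if a = b then g a else 0) else g a,
    ← mul_prod_erase univ _ (mem_univ j)]
  congr 1
  · simp
  · rw [← card_univ, ← card_erase_of_mem (mem_univ j), ← prod_const]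
    exact prod_congr rfl fun k hk => by simp [ne_of_mem_erase hk]

lemma sq_sum_div_le_sum_sq_div_of_nonneg {ι R : Type*} [Field R] [LinearOrder R]
    [IsStrictOrderedRing R] (s : Finset ι) {f g : ι → R} (hg : ∀ i ∈ s, 0 ≤ g i)
    (hfg : ∀ i ∈ s, g i = 0 → f i = 0) :
    (∑ i ∈ s, f i) ^ 2 / ∑ i ∈ s, g i ≤ ∑ i ∈ s, f i ^ 2 / g i := by
  have H : ∀ i ∈ s, 0 ≤ f i ^ 2 / g i := fun i hi => div_nonneg (sq_nonneg _) (hg i hi)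
  refine div_le_of_le_mul₀ (sum_nonneg hg) (sum_nonneg H)
    (sum_sq_le_sum_mul_sum_of_sq_le_mul _ H hg fun i hi => ?_)
  rcases eq_or_ne (g i) 0 with h | h
  · simp [hfg i hi h]
  · rw [div_mul_cancel₀ _ h]

lemma add_sq_div_eq {R : Type*} [Field R] (a b : R) {x y : R} (h : y = 0 → x = 0) :
    (a * x + b * y) ^ 2 / y = a ^ 2 * (x ^ 2 / y) + 2 * a * b * x + b ^ 2 * y := by
  rcases eq_or_ne y 0 with hy | hy
  · simp [hy, h hy]
  · field_simp
    ring

lemma Fin.cons_comp_castSucc {α : Type*} {m : ℕ} (a : α) (w : Fin (m + 1) → α) :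
    (Fin.cons a w : Fin (m + 2) → α) ∘ Fin.castSucc = Fin.cons a (w ∘ Fin.castSucc) := by
  funext i
  induction i using Fin.cases <;> simp

section Channel

lemma sum_Mmat (θ Δ : ℝ) (i : Fin 2) : ∑ j, Mmat θ Δ i j = 1 := by
  fin_cases i <;> simp [Mmat] <;> ring

lemma sum_pst (θ Δ : ℝ) : ∑ i, pst θ Δ i = 1 := by
  simp [pst]
  norm_num

lemma sum_sum_Mmat_mul {β : Type*} [Fintype β] (θ Δ : ℝ) (i : Fin 2) (w : Fin 2 → β → ℝ)
    (hw : ∀ c, ∑ b, w c b = 1) : ∑ b, ∑ c, Mmat θ Δ i c * w c b = 1 := by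
  rw [sum_comm]
  simp_rw [← mul_sum, hw, mul_one, sum_Mmat]

lemma Mmat_zero_zero_eq (θ Δ : ℝ) : Mmat θ Δ 0 0 = θ + Mmat θ Δ 1 0 := by
  simp [Mmat]
  ring

variable {θ Δ : ℝ}

lemma lt_one_of_Mmat_pos (hM : ∀ i j, 0 < Mmat θ Δ i j) : θ < 1 := by
  have h01 := hM 0 1
  have h10 := hM 1 0
  simp only [Mmat] at h01 h10
  norm_num at h01 h10
  linarith

lemma pst_pos (hM : ∀ i j, 0 < Mmat θ Δ i j) (i : Fin 2) : 0 < pst θ Δ i := by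
  have hθ := sub_pos.2 (lt_one_of_Mmat_pos hM)
  have h0 : pst θ Δ 0 = Mmat θ Δ 1 0 / (1 - θ) := by simp [pst, Mmat]; field_simp
  have h1 : pst θ Δ 1 = Mmat θ Δ 0 1 / (1 - θ) := by simp [pst, Mmat]; field_simp
  fin_cases i
  · exact h0 ▸ div_pos (hM 1 0) hθ
  · exact h1 ▸ div_pos (hM 0 1) hθ

lemma pst_mul_Mmat_comm (hθ : θ ≠ 1) (i j : Fin 2) :
    pst θ Δ i * Mmat θ Δ i j = pst θ Δ j * Mmat θ Δ j i := by
  have : 1 - θ ≠ 0 := sub_ne_zero.2 hθ.symm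
  fin_cases i <;> fin_cases j <;> simp [pst, Mmat] <;> field_simp

lemma Mmat_one_zero_eq (hθ : θ ≠ 1) : Mmat θ Δ 1 0 = (1 - θ) * pst θ Δ 0 := by
  have : 1 - θ ≠ 0 := sub_ne_zero.2 hθ.symm
  simp [pst, Mmat]
  field_simp

end Channel

section Tree

variable {d : ℕ}

noncomputable def edgeWeight (θ Δ : ℝ) (n : ℕ) (σ : Conf d n) : ℝ :=
  ∏ k : Fin n, ∏ v : Vert d (k + 1),
    Mmat θ Δ (σ k.castSucc (v ∘ Fin.castSucc)) (σ k.succ v)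

lemma confProb_eq_pst_mul_edgeWeight (θ Δ : ℝ) (n : ℕ) (σ : Conf d n) :
    confProb d θ Δ n σ = pst θ Δ (root σ) * edgeWeight θ Δ n σ := rfl

lemma edgeWeight_nonneg {θ Δ : ℝ} (hM : ∀ i j, 0 ≤ Mmat θ Δ i j) (n : ℕ) (σ : Conf d n) :
    0 ≤ edgeWeight θ Δ n σ :=
  prod_nonneg fun _ _ => prod_nonneg fun _ _ => hM _ _

def subtree (j : Fin d) {n : ℕ} (σ : Conf d (n + 1)) : Conf d n :=
  fun k w => σ k.succ (Fin.cons j w)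

def confEquiv {n : ℕ} : Conf d (n + 1) ≃ Fin 2 × (Fin d → Conf d n) where
  toFun σ := (root σ, fun j => subtree j σ)
  invFun p := fun k =>
    match k with
    | ⟨0, _⟩ => fun _ => p.1
    | ⟨k + 1, h⟩ => fun v => p.2 (v 0) ⟨k, Nat.lt_of_succ_lt_succ h⟩ (Fin.tail v)
  left_inv σ := by
    funext ⟨k, hk⟩ v
    cases k with
    | zero => exact congrArg (σ ⟨0, hk⟩) (funext fun i => i.elim0)
    | succ k => exact congrArg (σ ⟨k + 1, hk⟩) (Fin.cons_self_tail v)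
  right_inv p := by
    refine Prod.ext rfl ?_
    funext j k w
    change p.2 ((Fin.cons (α := fun _ => Fin d) j w) 0) k
      (Fin.tail (Fin.cons (α := fun _ => Fin d) j w)) = p.2 j k w
    rw [Fin.cons_zero, Fin.tail_cons]

@[simp]
lemma root_confEquiv_symm {n : ℕ} (p : Fin 2 × (Fin d → Conf d n)) :
    root (confEquiv.symm p) = p.1 :=
  congrArg Prod.fst (confEquiv.apply_symm_apply p)

@[simp]
lemma subtree_confEquiv_symm {n : ℕ} (p : Fin 2 × (Fin d → Conf d n)) (j : Fin d) :
    subtree j (confEquiv.symm p) = p.2 j :=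
  congrFun (congrArg Prod.snd (confEquiv.apply_symm_apply p)) j

def rootEquiv : Conf d 0 ≃ Fin 2 where
  toFun := root
  invFun r _ _ := r
  left_inv σ := by
    funext ⟨k, hk⟩ v
    obtain rfl : k = 0 := by omega
    exact congrArg (σ ⟨0, hk⟩) (funext fun i => i.elim0)
  right_inv _ := rfl

def lconfEquiv {n : ℕ} : LConf d (n + 1) ≃ (Fin d → LConf d n) where
  toFun A j := restrictChild j A
  invFun T v := T (v 0) (Fin.tail v)
  left_inv A := funext fun v => congrArg A (Fin.cons_self_tail v)
  right_inv T := by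
    funext j w
    change T ((Fin.cons (α := fun _ => Fin d) j w) 0)
      (Fin.tail (Fin.cons (α := fun _ => Fin d) j w)) = T j w
    rw [Fin.cons_zero, Fin.tail_cons]

@[simp]
lemma restrictChild_lconfEquiv_symm {n : ℕ} (T : Fin d → LConf d n) (j : Fin d) :
    restrictChild j (lconfEquiv.symm T) = T j :=
  congrFun (lconfEquiv.apply_symm_apply T) j

lemma top_eq_iff_forall_top_subtree {n : ℕ} (σ : Conf d (n + 1)) (A : LConf d (n + 1)) :
    top σ = A ↔ ∀ j, top (subtree j σ) = restrictChild j A := by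
  refine ⟨fun h j => by rw [← h]; rfl, fun h => funext fun v => ?_⟩
  have := congrFun (h (v 0)) (Fin.tail v)
  change σ (Fin.last n).succ (Fin.cons (v 0) (Fin.tail v)) = A (Fin.cons (v 0) (Fin.tail v)) at this
  rwa [Fin.cons_self_tail] at this

lemma edgeWeight_succ (θ Δ : ℝ) (n : ℕ) (σ : Conf d (n + 1)) :
    edgeWeight θ Δ (n + 1) σ
      = ∏ j, Mmat θ Δ (root σ) (root (subtree j σ)) * edgeWeight θ Δ n (subtree j σ) := by
  unfold edgeWeight
  rw [Fin.prod_univ_succ, prod_mul_distrib]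
  congr 1
  · have : Unique (Fin (((0 : Fin (n + 1)) : ℕ) + 1)) := inferInstanceAs (Unique (Fin 1))
    rw [← (Equiv.funUnique (Fin (((0 : Fin (n + 1)) : ℕ) + 1)) (Fin d)).symm.prod_comp]
    refine prod_congr rfl fun j _ => ?_
    have hc : (fun (_ : Fin (((0 : Fin (n + 1)) : ℕ) + 1)) => j) = Fin.cons j Fin.elim0 := by
      funext i
      induction i using Fin.cases with
      | zero => rfl
      | succ i => exact i.elim0
    exact congrArg₂ (Mmat θ Δ) (congrArg (σ 0) (funext fun i => i.elim0)) (congrArg (σ 1) hc)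
  · refine (prod_congr rfl fun k _ => ?_).trans prod_comm
    change (∏ v : Fin ((k : ℕ) + 1 + 1) → Fin d,
        Mmat θ Δ (σ k.succ.castSucc (v ∘ Fin.castSucc)) (σ k.succ.succ v)) = _
    rw [← (Fin.consEquiv fun _ : Fin ((k : ℕ) + 1 + 1) => Fin d).prod_comp,
      Fintype.prod_prod_type]
    refine prod_congr rfl fun j _ => prod_congr rfl fun w _ => ?_
    change Mmat θ Δ (σ k.succ.castSucc ((Fin.cons j w : Fin (k + 2) → Fin d) ∘ Fin.castSucc))
        (σ k.succ.succ (Fin.cons j w)) = _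
    rw [Fin.cons_comp_castSucc]
    rfl

/-- `P(σ(n) = B ∣ σ_ρ = i)`, without the division by `π_i` of `condLevel`. -/
noncomputable def levelGivenRoot (θ Δ : ℝ) (n : ℕ) (i : Fin 2) (B : LConf d n) : ℝ :=
  ∑ σ : Conf d n, if root σ = i ∧ top σ = B then edgeWeight θ Δ n σ else 0

lemma jointProb_eq_pst_mul_levelGivenRoot (θ Δ : ℝ) (n : ℕ) (i : Fin 2) (A : LConf d n) :
    jointProb d θ Δ n i A = pst θ Δ i * levelGivenRoot θ Δ n i A := by
  rw [levelGivenRoot, mul_sum]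
  refine sum_congr rfl fun σ _ => ?_
  split_ifs with h
  · rw [confProb_eq_pst_mul_edgeWeight, h.1]
  · rw [mul_zero]

lemma levelGivenRoot_nonneg {θ Δ : ℝ} (hM : ∀ i j, 0 ≤ Mmat θ Δ i j) (n : ℕ) (i : Fin 2)
    (B : LConf d n) : 0 ≤ levelGivenRoot θ Δ n i B :=
  sum_nonneg fun σ _ => by
    split_ifs
    exacts [edgeWeight_nonneg hM n σ, le_rfl]

lemma sum_ite_top_eq_sum_levelGivenRoot (θ Δ : ℝ) {n : ℕ} (B : LConf d n) (g : Fin 2 → ℝ) :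
    ∑ σ : Conf d n, (if top σ = B then g (root σ) * edgeWeight θ Δ n σ else 0)
      = ∑ c, g c * levelGivenRoot θ Δ n c B := by
  simp_rw [levelGivenRoot, mul_sum]
  rw [sum_comm]
  refine sum_congr rfl fun σ _ => ?_
  simp_rw [mul_ite, mul_zero, ite_and]
  rw [sum_ite_eq]
  simp

lemma levelGivenRoot_succ (θ Δ : ℝ) (n : ℕ) (i : Fin 2) (A : LConf d (n + 1)) :
    levelGivenRoot θ Δ (n + 1) i A
      = ∏ j, ∑ c, Mmat θ Δ i c * levelGivenRoot θ Δ n c (restrictChild j A) := by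
  rw [levelGivenRoot, ← confEquiv.symm.sum_comp, Fintype.sum_prod_type]
  simp only [root_confEquiv_symm, top_eq_iff_forall_top_subtree, subtree_confEquiv_symm,
    edgeWeight_succ, ite_and]
  rw [sum_comm]
  simp only [sum_ite_eq', mem_univ, if_true]
  rw [← prod_congr rfl fun j _ => sum_ite_top_eq_sum_levelGivenRoot θ Δ _ (Mmat θ Δ i),
    Fintype.prod_sum]
  refine sum_congr rfl fun τ _ => ?_
  rw [Fintype.prod_ite_zero]
  congr

lemma sum_levelGivenRoot (θ Δ : ℝ) (n : ℕ) (i : Fin 2) :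
    ∑ B : LConf d n, levelGivenRoot θ Δ n i B = 1 := by
  induction n generalizing i with
  | zero =>
    have hw : ∀ σ : Conf d 0, edgeWeight θ Δ 0 σ = 1 := fun σ => by simp [edgeWeight]
    unfold levelGivenRoot
    rw [sum_comm]
    calc ∑ σ : Conf d 0, ∑ B, (if root σ = i ∧ top σ = B then edgeWeight θ Δ 0 σ else 0)
        = ∑ σ : Conf d 0, if root σ = i then 1 else 0 :=
          sum_congr rfl fun σ _ => by simp [ite_and, hw]
      _ = ∑ r : Fin 2, if r = i then 1 else 0 := rootEquiv.sum_comp fun r => if r = i then 1 else 0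
      _ = 1 := by simp
  | succ n ih =>
    simp_rw [levelGivenRoot_succ, ← lconfEquiv.symm.sum_comp, restrictChild_lconfEquiv_symm]
    rw [← Fintype.prod_sum fun _ C => ∑ c, Mmat θ Δ i c * levelGivenRoot θ Δ n c C]
    simp only [sum_sum_Mmat_mul θ Δ i _ ih, prod_const_one]

lemma sum_levelGivenRoot_fiber (θ Δ : ℝ) (n : ℕ) (i : Fin 2) (j : Fin d) (B : LConf d n) :
    ∑ A with restrictChild j A = B, levelGivenRoot θ Δ (n + 1) i A
      = ∑ c, Mmat θ Δ i c * levelGivenRoot θ Δ n c B := by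
  rw [sum_filter, ← lconfEquiv.symm.sum_comp]
  simp_rw [restrictChild_lconfEquiv_symm, levelGivenRoot_succ, restrictChild_lconfEquiv_symm]
  rw [sum_pi_ite_apply_eq_mul_pow fun C => ∑ c, Mmat θ Δ i c * levelGivenRoot θ Δ n c C,
    sum_sum_Mmat_mul θ Δ i _ (sum_levelGivenRoot θ Δ n), one_pow, mul_one]

end Tree

/-- `E[f_n(1, σ(n))²]`, with `jointProb² / levelProb` in place of `levelProb · post²`. -/
noncomputable def postSqMoment (d : ℕ) (θ Δ : ℝ) (n : ℕ) : ℝ :=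
  ∑ A : LConf d n, jointProb d θ Δ n 0 A ^ 2 / levelProb d θ Δ n A

lemma xseq_eq_postSqMoment (d : ℕ) (θ Δ : ℝ) (n : ℕ) :
    xseq d θ Δ n = (postSqMoment d θ Δ n - pst θ Δ 0 ^ 2) / pst θ Δ 0 := by
  rw [sub_div, sq, mul_self_div_self, postSqMoment, sum_div, xseq, expect1]
  congr 1
  refine sum_congr rfl fun A _ => ?_
  rw [condLevel, post, div_mul_div_comm, div_div, sq, mul_comm (pst θ Δ 0)]

section Posterior

variable {d : ℕ} {θ Δ : ℝ}

lemma levelProb_eq_sum_jointProb (n : ℕ) (A : LConf d n) :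
    levelProb d θ Δ n A = ∑ i, jointProb d θ Δ n i A := by
  simp only [levelProb, jointProb, ite_and]
  rw [sum_comm]
  refine sum_congr rfl fun σ _ => ?_
  rw [sum_ite_eq]
  simp

lemma jointProb_nonneg (hM : ∀ i j, 0 < Mmat θ Δ i j) (n : ℕ) (i : Fin 2) (A : LConf d n) :
    0 ≤ jointProb d θ Δ n i A := by
  rw [jointProb_eq_pst_mul_levelGivenRoot]
  exact mul_nonneg (pst_pos hM i).le (levelGivenRoot_nonneg (fun i j => (hM i j).le) n i A)

lemma levelProb_nonneg (hM : ∀ i j, 0 < Mmat θ Δ i j) (n : ℕ) (A : LConf d n) :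
    0 ≤ levelProb d θ Δ n A := by
  rw [levelProb_eq_sum_jointProb]
  exact sum_nonneg fun i _ => jointProb_nonneg hM n i A

lemma jointProb_eq_zero_of_levelProb_eq_zero (hM : ∀ i j, 0 < Mmat θ Δ i j) {n : ℕ}
    {A : LConf d n} (h : levelProb d θ Δ n A = 0) (i : Fin 2) : jointProb d θ Δ n i A = 0 := by
  rw [levelProb_eq_sum_jointProb, sum_eq_zero_iff_of_nonneg fun i _ => jointProb_nonneg hM n i A]
    at h
  exact h i (mem_univ i)

lemma sum_jointProb (n : ℕ) (i : Fin 2) : ∑ A : LConf d n, jointProb d θ Δ n i A = pst θ Δ i := by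
  simp_rw [jointProb_eq_pst_mul_levelGivenRoot, ← mul_sum, sum_levelGivenRoot, mul_one]

lemma sum_levelProb (n : ℕ) : ∑ A : LConf d n, levelProb d θ Δ n A = 1 := by
  simp_rw [levelProb_eq_sum_jointProb]
  rw [sum_comm]
  simp_rw [sum_jointProb, sum_pst]

lemma sum_jointProb_fiber (hθ : θ ≠ 1) (n : ℕ) (i : Fin 2) (j : Fin d) (B : LConf d n) :
    ∑ A with restrictChild j A = B, jointProb d θ Δ (n + 1) i A
      = ∑ c, jointProb d θ Δ n c B * Mmat θ Δ c i := by
  simp_rw [jointProb_eq_pst_mul_levelGivenRoot, ← mul_sum, sum_levelGivenRoot_fiber, mul_sum,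
    ← mul_assoc, pst_mul_Mmat_comm hθ i]
  exact sum_congr rfl fun c _ => by ring

lemma sum_levelProb_fiber (hθ : θ ≠ 1) (n : ℕ) (j : Fin d) (B : LConf d n) :
    ∑ A with restrictChild j A = B, levelProb d θ Δ (n + 1) A = levelProb d θ Δ n B := by
  simp_rw [levelProb_eq_sum_jointProb]
  rw [sum_comm]
  simp_rw [sum_jointProb_fiber hθ]
  rw [sum_comm]
  simp_rw [← mul_sum, sum_Mmat, mul_one]

lemma sum_jointProb_zero_fiber (hθ : θ ≠ 1) (n : ℕ) (j : Fin d) (B : LConf d n) :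
    ∑ A with restrictChild j A = B, jointProb d θ Δ (n + 1) 0 A
      = θ * jointProb d θ Δ n 0 B + (1 - θ) * pst θ Δ 0 * levelProb d θ Δ n B := by
  rw [sum_jointProb_fiber hθ, levelProb_eq_sum_jointProb, Fin.sum_univ_two, Fin.sum_univ_two,
    ← Mmat_one_zero_eq hθ, Mmat_zero_zero_eq]
  ring

lemma sq_pst_le_postSqMoment (hM : ∀ i j, 0 < Mmat θ Δ i j) (n : ℕ) :
    pst θ Δ 0 ^ 2 ≤ postSqMoment d θ Δ n := by
  have h := sq_sum_div_le_sum_sq_div_of_nonneg univ (fun A _ => levelProb_nonneg hM n A)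
    fun A _ hA => jointProb_eq_zero_of_levelProb_eq_zero (d := d) hM hA 0
  rwa [sum_jointProb, sum_levelProb, div_one] at h

lemma xseq_nonneg (hM : ∀ i j, 0 < Mmat θ Δ i j) (n : ℕ) : 0 ≤ xseq d θ Δ n := by
  rw [xseq_eq_postSqMoment]
  exact div_nonneg (sub_nonneg.2 (sq_pst_le_postSqMoment hM n)) (pst_pos hM 0).le

lemma sq_div_levelProb_le_sum_fiber (hM : ∀ i j, 0 < Mmat θ Δ i j) (j : Fin d) (n : ℕ)
    (B : LConf d n) :
    (θ * jointProb d θ Δ n 0 B + (1 - θ) * pst θ Δ 0 * levelProb d θ Δ n B) ^ 2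
        / levelProb d θ Δ n B
      ≤ ∑ A with restrictChild j A = B,
          jointProb d θ Δ (n + 1) 0 A ^ 2 / levelProb d θ Δ (n + 1) A := by
  have hθ : θ ≠ 1 := (lt_one_of_Mmat_pos hM).ne
  rw [← sum_jointProb_zero_fiber hθ, ← sum_levelProb_fiber hθ n j B]
  exact sq_sum_div_le_sum_sq_div_of_nonneg _ (fun A _ => levelProb_nonneg hM _ A)
    fun A _ hA => jointProb_eq_zero_of_levelProb_eq_zero hM hA 0

lemma sq_mul_postSqMoment_sub_le (hM : ∀ i j, 0 < Mmat θ Δ i j) (j : Fin d) (n : ℕ) :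
    θ ^ 2 * (postSqMoment d θ Δ n - pst θ Δ 0 ^ 2)
      ≤ postSqMoment d θ Δ (n + 1) - pst θ Δ 0 ^ 2 := by
  have hexpand (B : LConf d n) :=
    add_sq_div_eq θ ((1 - θ) * pst θ Δ 0) (jointProb_eq_zero_of_levelProb_eq_zero hM (A := B) · 0)
  calc θ ^ 2 * (postSqMoment d θ Δ n - pst θ Δ 0 ^ 2)
      = ∑ B, (θ * jointProb d θ Δ n 0 B + (1 - θ) * pst θ Δ 0 * levelProb d θ Δ n B) ^ 2
          / levelProb d θ Δ n B - pst θ Δ 0 ^ 2 := by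
        simp_rw [hexpand, sum_add_distrib, ← mul_sum, sum_jointProb, sum_levelProb, postSqMoment]
        ring
    _ ≤ postSqMoment d θ Δ (n + 1) - pst θ Δ 0 ^ 2 := by
        rw [postSqMoment, ← sum_fiberwise univ (restrictChild j)]
        gcongr with B
        exact sq_div_levelProb_le_sum_fiber hM j n B

lemma sq_mul_xseq_le_xseq_succ [NeZero d] (hM : ∀ i j, 0 < Mmat θ Δ i j) (n : ℕ) :
    θ ^ 2 * xseq d θ Δ n ≤ xseq d θ Δ (n + 1) := by
  rw [xseq_eq_postSqMoment, xseq_eq_postSqMoment, ← mul_div_assoc]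
  exact div_le_div_of_nonneg_right (sq_mul_postSqMoment_sub_le hM 0 n) (pst_pos hM 0).le

end Posterior

theorem xseq_no_sudden_drop_general (π1 π2 : ℝ) :
    ∀ ϱ : ℝ, 0 < ϱ → ∃ γ : ℝ, 0 < γ ∧
      ∀ d : ℕ, 2 ≤ d → ∀ θ : ℝ, ϱ < |θ| →
        (∀ i j, 0 < Mmat θ (Dlt θ π1 π2) i j) → (d : ℝ) * θ ^ 2 ≤ 1 →
        ∀ n : ℕ, γ * xseq d θ (Dlt θ π1 π2) n ≤ xseq d θ (Dlt θ π1 π2) (n + 1) := by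
  intro ϱ hϱ
  refine ⟨ϱ ^ 2, by positivity, fun d hd θ hθ hM _ n => ?_⟩
  have : NeZero d := ⟨by omega⟩
  have hϱθ : ϱ ^ 2 ≤ θ ^ 2 := by
    rw [← sq_abs θ]
    exact pow_le_pow_left₀ hϱ.le hθ.le 2
  calc ϱ ^ 2 * xseq d θ (Dlt θ π1 π2) n ≤ θ ^ 2 * xseq d θ (Dlt θ π1 π2) n :=
        mul_le_mul_of_nonneg_right hϱθ (xseq_nonneg hM n)
    _ ≤ xseq d θ (Dlt θ π1 π2) (n + 1) := sq_mul_xseq_le_xseq_succ hM n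

/-- Fix `ϱ > 0` and assume `|θ| > ϱ` and `dθ² ≤ 1`. Then there is a
constant `γ = γ(π, ϱ) > 0` such that `x_{n+1} ≥ γ x_n` for all `n ≥ 0`. -/
theorem xseq_no_sudden_drop (π1 π2 : ℝ) (hsum : π1 + π2 = 1) (hord : π2 ≤ π1)
    (hpi2 : 0 < π2) :
    ∀ ϱ : ℝ, 0 < ϱ → ∃ γ : ℝ, 0 < γ ∧
      ∀ d : ℕ, 2 ≤ d → ∀ θ : ℝ, ϱ < |θ| →
        (∀ i j, 0 < Mmat θ (Dlt θ π1 π2) i j) → (d : ℝ) * θ ^ 2 ≤ 1 →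
        ∀ n : ℕ, γ * xseq d θ (Dlt θ π1 π2) n ≤ xseq d θ (Dlt θ π1 π2) (n + 1) :=
  xseq_no_sudden_drop_general π1 π2

end AsymIsing
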